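/- Let $(a_t)_{t \ge 2}$ and $(b_t)_{t \ge 2}$ be sequences of nonnegative reals with $b_t \le a_t + 2\mu\sqrt{a_t} + \mu^2$ for each $t$, where $\mu = \Gamma/(\lambda T^{3/2})$ for some $T \ge 2$, $\Gamma, \lambda > 0$. Suppose $a_{t+1} \le (1 - 2/t) b_t + \Gamma^2/(\lambda^2 t^2)$ for $2 \le t < T$ and $a_2 \le \Gamma^2/(4\lambda^2)$. Then $b_t \le 7\Gamma^2/(\lambda^2 t)$ for all $2 \le t \le T$. -/

import Mathlib

/-!
Induct directly on the claimed bound `b t ≤ 7 c / t`, where `c = Γ² / λ²`; note `μ² = c / T³`.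
If it holds at `t`, the recursion gives `a (t + 1) ≤ (7t - 13) c / t² ≤ 7c / (t + 1)`. The noise then
adds at most `2μ√a + μ² ≤ 2√7 c / (t + 1)² + c / (t + 1)³`, because `μ² ≤ c / (t + 1)³` for
`t + 1 ≤ T`, and the slack `7c / (t + 1) - (7t - 13) c / t² ≈ 6c / t²` absorbs this since `2√7 < 6`.
-/

open Real

lemma div_mul_rpow_three_halves_sq (x y : ℝ) {T : ℝ} (hT : 0 ≤ T) :
    (x / (y * T ^ ((3 : ℝ) / 2))) ^ 2 = x ^ 2 / y ^ 2 / T ^ 3 := by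
  rw [div_pow, mul_pow, ← rpow_natCast (T ^ _), ← rpow_mul hT, div_div]
  norm_num

lemma le_add_two_mul_sqrt_add_of_le {a b μ A M : ℝ} (ha : 0 ≤ a) (haA : a ≤ A) (hμ : μ ^ 2 ≤ M)
    (hb : b ≤ a + 2 * μ * √a + μ ^ 2) : b ≤ a + 2 * √(A * M) + M := by
  have cross : μ * √a ≤ √(A * M) :=
    calc μ * √a ≤ |μ| * √a := mul_le_mul_of_nonneg_right (le_abs_self μ) (sqrt_nonneg a)
      _ = √(a * μ ^ 2) := by rw [sqrt_mul ha, sqrt_sq_eq_abs, mul_comm]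
      _ ≤ √(A * M) := sqrt_le_sqrt (mul_le_mul haA hμ (sq_nonneg μ) (ha.trans haA))
  linarith

lemma le_add_of_le_seven_div {a b μ c u : ℝ} (hu : 0 < u) (hc : 0 ≤ c) (ha : 0 ≤ a)
    (hau : a ≤ 7 * c / u) (hμ : μ ^ 2 ≤ c / u ^ 3) (hb : b ≤ a + 2 * μ * √a + μ ^ 2) :
    b ≤ a + 6 * c / u ^ 2 + c / u ^ 3 := by
  have hsqrt : √(7 * c / u * (c / u ^ 3)) ≤ 3 * c / u ^ 2 := by
    refine sqrt_le_iff.mpr ⟨by positivity, ?_⟩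
    calc 7 * c / u * (c / u ^ 3) = 7 * (c / u ^ 2) ^ 2 := by field_simp
      _ ≤ 9 * (c / u ^ 2) ^ 2 := by gcongr; norm_num
      _ = (3 * c / u ^ 2) ^ 2 := by ring
  linear_combination le_add_two_mul_sqrt_add_of_le ha hau hμ hb + 2 * hsqrt

lemma recursion_step_le {s : ℝ} (hs : 0 < s) {c : ℝ} (hc : 0 ≤ c) :
    (1 - 2 / s) * (7 * c / s) + c / s ^ 2 + 6 * c / (s + 1) ^ 2 + c / (s + 1) ^ 3
      ≤ 7 * c / (s + 1) := by
  have key : 7 * c / (s + 1) - ((1 - 2 / s) * (7 * c / s) + c / s ^ 2 + 6 * c / (s + 1) ^ 2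
      + c / (s + 1) ^ 3) = c * (18 * s ^ 2 + 32 * s + 13) / (s ^ 2 * (s + 1) ^ 3) := by
    field_simp
    ring
  rw [← sub_nonneg, key]
  positivity

theorem le_seven_div_of_noisy_recursion {c μ : ℝ} (hc : 0 ≤ c) {T : ℕ} (hμ : μ ^ 2 ≤ c / T ^ 3)
    {a b : ℕ → ℝ} (ha : ∀ t, 0 ≤ a t)
    (hab : ∀ t : ℕ, 2 ≤ t → b t ≤ a t + 2 * μ * √(a t) + μ ^ 2)
    (hrec : ∀ t : ℕ, 2 ≤ t → t < T → a (t + 1) ≤ (1 - 2 / (t : ℝ)) * b t + c / (t : ℝ) ^ 2)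
    (hinit : a 2 ≤ c / 4) :
    ∀ t : ℕ, 2 ≤ t → t ≤ T → b t ≤ 7 * c / t := by
  have hμ_le : ∀ u : ℝ, 0 < u → u ≤ T → μ ^ 2 ≤ c / u ^ 3 := fun u hu huT =>
    hμ.trans (div_le_div_of_nonneg_left hc (by positivity) (pow_le_pow_left₀ hu.le huT 3))
  intro t ht
  induction t, ht using Nat.le_induction with
  | base =>
    intro h2T
    have hμ2 := hμ_le 2 two_pos (by exact_mod_cast h2T)
    have := le_add_of_le_seven_div two_pos hc (ha 2) (by linarith) hμ2 (hab 2 le_rfl)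
    rw [Nat.cast_ofNat]
    linarith
  | succ s hs ih =>
    intro hsT
    have hs2 : (2 : ℝ) ≤ s := by exact_mod_cast hs
    have hbs : b s ≤ 7 * c / s := ih (by omega)
    have hA : a (s + 1) ≤ (1 - 2 / (s : ℝ)) * (7 * c / s) + c / (s : ℝ) ^ 2 := by
      have : 0 ≤ 1 - 2 / (s : ℝ) := by
        rw [sub_nonneg, div_le_one (by positivity)]
        exact hs2
      linarith [hrec s hs hsT, mul_le_mul_of_nonneg_left hbs this]
    have hstep := recursion_step_le (s := s) (by positivity) hc
    have hμs := hμ_le (s + 1) (by positivity) (by exact_mod_cast hsT)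
    have hau : a (s + 1) ≤ 7 * c / (s + 1) := by
      have : 0 ≤ 6 * c / ((s : ℝ) + 1) ^ 2 + c / ((s : ℝ) + 1) ^ 3 := by positivity
      linarith
    have := le_add_of_le_seven_div (by positivity) hc (ha _) hau hμs (hab _ (by omega))
    push_cast
    linarith

theorem stmt_1_general (Γ lam : ℝ)
    (T : ℕ)
    (μ : ℝ) (hμ : μ = Γ / (lam * (T : ℝ) ^ ((3 : ℝ) / 2)))
    (a b : ℕ → ℝ) (ha : ∀ t, 0 ≤ a t)
    (hab : ∀ t : ℕ, 2 ≤ t → b t ≤ a t + 2 * μ * Real.sqrt (a t) + μ ^ 2)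
    (hrec : ∀ t : ℕ, 2 ≤ t → t < T →
      a (t + 1) ≤ (1 - 2 / (t : ℝ)) * b t + Γ ^ 2 / (lam ^ 2 * (t : ℝ) ^ 2))
    (hinit : a 2 ≤ Γ ^ 2 / (4 * lam ^ 2)) :
    ∀ t : ℕ, 2 ≤ t → t ≤ T → b t ≤ 7 * Γ ^ 2 / (lam ^ 2 * (t : ℝ)) := by
  intro t ht htT
  have hμ_sq : μ ^ 2 = Γ ^ 2 / lam ^ 2 / T ^ 3 := by
    rw [hμ, div_mul_rpow_three_halves_sq _ _ (Nat.cast_nonneg T)]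
  calc b t ≤ 7 * (Γ ^ 2 / lam ^ 2) / t :=
        le_seven_div_of_noisy_recursion (by positivity) hμ_sq.le ha hab
          (fun s hs hsT => (hrec s hs hsT).trans_eq (by ring)) (hinit.trans_eq (by ring)) t ht htT
    _ = 7 * Γ ^ 2 / (lam ^ 2 * t) := by ring

theorem stmt_1 (Γ lam : ℝ) (hΓ : 0 < Γ) (hlam : 0 < lam)
    (T : ℕ) (hT : 2 ≤ T)
    (μ : ℝ) (hμ : μ = Γ / (lam * (T : ℝ) ^ ((3 : ℝ) / 2)))
    (a b : ℕ → ℝ) (ha : ∀ t, 0 ≤ a t) (hb : ∀ t, 0 ≤ b t)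
    (hab : ∀ t : ℕ, 2 ≤ t → b t ≤ a t + 2 * μ * Real.sqrt (a t) + μ ^ 2)
    (hrec : ∀ t : ℕ, 2 ≤ t → t < T →
      a (t + 1) ≤ (1 - 2 / (t : ℝ)) * b t + Γ ^ 2 / (lam ^ 2 * (t : ℝ) ^ 2))
    (hinit : a 2 ≤ Γ ^ 2 / (4 * lam ^ 2)) :
    ∀ t : ℕ, 2 ≤ t → t ≤ T → b t ≤ 7 * Γ ^ 2 / (lam ^ 2 * (t : ℝ)) :=
  stmt_1_general Γ lam T μ hμ a b ha hab hrec hinit
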